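/- arXiv:2102.06565 — 4 statements merged into one kernel-verified Lean document; each statement's English description precedes it below -/
import Mathlib

section
/- Let G be a weighted graph and let H_k be the union of spanning forests F_1, ..., F_k, where F_i is a spanning forest of G minus the edges of F_1 ∪ ... ∪ F_{i-1}. Then H_k has at most k(n-1) edges and every cut of G of value at most k has all of its crossing edges contained in H_k (equivalently, H_k is a sparse k-connectivity certificate). -/
/-- An edge `e` crosses the cut `(A, Aᶜ)` if its endpoints lie on opposite sides. -/
def Crosses {V E : Type*} (ends : E → Sym2 V) (A : Set V) (e : E) : Prop :=
  ∃ u v : V, ends e = s(u, v) ∧ u ∈ A ∧ v ∉ A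

/-- A finite set of multigraph edges is a forest (acyclic) iff every nonempty
subset of edges spans strictly more vertices than it has edges. -/
def IsForest {V E : Type*} (ends : E → Sym2 V) (F : Finset E) : Prop :=
  ∀ F' : Finset E, F' ⊆ F → F'.Nonempty →
    F'.card < Nat.card {v : V | ∃ e ∈ F', v ∈ ends e}

/-- `F` is a spanning forest of the edge set `S`: a maximal acyclic subset of `S`. -/
def IsSpanningForestOf {V E : Type*} (ends : E → Sym2 V) (F S : Finset E) : Prop :=
  F ⊆ S ∧ IsForest ends F ∧
    ∀ F' : Finset E, F ⊆ F' → F' ⊆ S → IsForest ends F' → F' = F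

/-- If `F` is a forest but `insert e F` is not, and `e` crosses a cut `A`,
then some edge of `F` crosses the cut `A`. -/
lemma NI_exists_crossing {V E : Type*} [Fintype V] [DecidableEq E]
    (ends : E → Sym2 V) (Fi : Finset E) (hforest : IsForest ends Fi)
    (e : E) (he : e ∉ Fi) (hnot : ¬ IsForest ends (insert e Fi))
    (u v : V) (hev : ends e = s(u, v)) (A : Set V) (hu : u ∈ A) (hv : v ∉ A) :
    ∃ f ∈ Fi, Crosses ends A f := by
  classical
  have hrep : ∀ s : Sym2 V, ∃ a b, s = s(a, b) := fun s => Sym2.ind (fun a b => ⟨a, b, rfl⟩) s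
  by_contra hcon
  push_neg at hcon
  rw [IsForest] at hnot
  push_neg at hnot
  obtain ⟨F', hsub, hne, hcard⟩ := hnot
  have heF' : e ∈ F' := by
    by_contra heF'
    have hFi : F' ⊆ Fi := by
      intro x hx
      rcases Finset.mem_insert.mp (hsub hx) with h | h
      · exact absurd (h ▸ hx) heF'
      · exact h
    exact absurd (hforest F' hFi hne) (not_lt.mpr hcard)
  have herase : F'.erase e ⊆ Fi := by
    intro f hf
    rcases Finset.mem_insert.mp (hsub (Finset.mem_of_mem_erase hf)) with h | h
    · exact absurd h (Finset.ne_of_mem_erase hf)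
    · exact h
  have hside : ∀ f ∈ F'.erase e, (∀ w ∈ ends f, w ∈ A) ∨ (∀ w ∈ ends f, w ∉ A) := by
    intro f hf
    have hfi : f ∈ Fi := herase hf
    obtain ⟨a, b, hab⟩ := hrep (ends f)
    by_cases ha : a ∈ A
    · by_cases hb : b ∈ A
      · left; intro w hw
        rw [hab] at hw
        rcases Sym2.mem_iff.mp hw with rfl | rfl <;> assumption
      · exact absurd ⟨a, b, hab, ha, hb⟩ (hcon f hfi)
    · by_cases hb : b ∈ A
      · exact absurd ⟨b, a, by rw [hab, Sym2.eq_swap], hb, ha⟩ (hcon f hfi)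
      · right; intro w hw
        rw [hab] at hw
        rcases Sym2.mem_iff.mp hw with rfl | rfl <;> assumption
  set FA := (F'.erase e).filter (fun f => ∀ w ∈ ends f, w ∈ A) with hFAdef
  set FB := (F'.erase e).filter (fun f => ¬ ∀ w ∈ ends f, w ∈ A) with hFBdef
  have hunion : FA ∪ FB = F'.erase e := Finset.filter_union_filter_not_eq _ _
  have hdisj : Disjoint FA FB := Finset.disjoint_filter_filter_not _ _ _
  have hcards : FA.card + FB.card = F'.card - 1 := by
    rw [← Finset.card_union_of_disjoint hdisj, hunion, Finset.card_erase_of_mem heF']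
  set W := {w : V | ∃ f ∈ F', w ∈ ends f} with hWdef
  have huW : u ∈ W ∩ A := ⟨⟨e, heF', by rw [hev]; exact Sym2.mem_iff.mpr (Or.inl rfl)⟩, hu⟩
  have hvW : v ∈ W ∩ Aᶜ := ⟨⟨e, heF', by rw [hev]; exact Sym2.mem_iff.mpr (Or.inr rfl)⟩, hv⟩
  -- side A counting
  have hWA : FA.card + 1 ≤ (W ∩ A).ncard := by
    rcases Finset.eq_empty_or_nonempty FA with hFA | hFA
    · have : 0 < (W ∩ A).ncard := (Set.ncard_pos (Set.toFinite _)).mpr ⟨u, huW⟩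
      simp [hFA]; omega
    · have hVAsub : {w : V | ∃ f ∈ FA, w ∈ ends f} ⊆ W ∩ A := by
        rintro w ⟨f, hf, hw⟩
        have hf' := Finset.mem_filter.mp hf
        exact ⟨⟨f, Finset.mem_of_mem_erase hf'.1, hw⟩, hf'.2 w hw⟩
      have := hforest FA (fun x hx => herase (Finset.mem_filter.mp hx).1) hFA
      rw [Nat.card_coe_set_eq] at this
      have hle := Set.ncard_le_ncard hVAsub (Set.toFinite _)
      omega
  have hWB : FB.card + 1 ≤ (W ∩ Aᶜ).ncard := by
    rcases Finset.eq_empty_or_nonempty FB with hFB | hFB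
    · have : 0 < (W ∩ Aᶜ).ncard := (Set.ncard_pos (Set.toFinite _)).mpr ⟨v, hvW⟩
      simp [hFB]; omega
    · have hVBsub : {w : V | ∃ f ∈ FB, w ∈ ends f} ⊆ W ∩ Aᶜ := by
        rintro w ⟨f, hf, hw⟩
        have hf' := Finset.mem_filter.mp hf
        rcases hside f hf'.1 with h | h
        · exact absurd h hf'.2
        · exact ⟨⟨f, Finset.mem_of_mem_erase hf'.1, hw⟩, h w hw⟩
      have := hforest FB (fun x hx => herase (Finset.mem_filter.mp hx).1) hFB
      rw [Nat.card_coe_set_eq] at this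
      have hle := Set.ncard_le_ncard hVBsub (Set.toFinite _)
      omega
  have hsplit : W.ncard = (W ∩ A).ncard + (W ∩ Aᶜ).ncard := by
    conv_lhs => rw [← Set.inter_union_compl W A]
    exact Set.ncard_union_eq
      ((disjoint_compl_right (a := A)).mono inf_le_right inf_le_right)
      (Set.toFinite _) (Set.toFinite _)
  rw [Nat.card_coe_set_eq] at hcard
  have hcardF' : 1 ≤ F'.card := Finset.card_pos.mpr hne
  omega

/-- Nagamochi–Ibaraki: if `F i` is a spanning forest of `G` minus the edges of
`F 0 ∪ ⋯ ∪ F (i-1)`, then `H = F 0 ∪ ⋯ ∪ F (k-1)` has at most `k (n-1)` edges and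
contains every edge crossing any cut of `G` of value at most `k`
(i.e. it is a sparse `k`-connectivity certificate). -/
theorem nagamochi_ibaraki_certificate {V E : Type*} [Fintype V] [DecidableEq E]
    (ends : E → Sym2 V) (G : Finset E) (k : ℕ) (F : ℕ → Finset E)
    (hF : ∀ i < k, IsSpanningForestOf ends (F i) (G \ (Finset.range i).biUnion F)) :
    ((Finset.range k).biUnion F).card ≤ k * (Fintype.card V - 1) ∧
    ∀ A : Set V, Nat.card {e : E | e ∈ G ∧ Crosses ends A e} ≤ k →
      ∀ e ∈ G, Crosses ends A e → e ∈ (Finset.range k).biUnion F := by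
  classical
  constructor
  · calc ((Finset.range k).biUnion F).card ≤ ∑ i ∈ Finset.range k, (F i).card :=
        Finset.card_biUnion_le
    _ ≤ ∑ _i ∈ Finset.range k, (Fintype.card V - 1) := by
        apply Finset.sum_le_sum
        intro i hi
        have hfi := (hF i (Finset.mem_range.mp hi)).2.1
        rcases Finset.eq_empty_or_nonempty (F i) with h | h
        · simp [h]
        · have hlt := hfi (F i) (subset_refl _) h
          have hle : Nat.card {v : V | ∃ e ∈ F i, v ∈ ends e} ≤ Fintype.card V := by
            rw [Nat.card_coe_set_eq]
            calc _ ≤ (Set.univ : Set V).ncard := Set.ncard_le_ncard (Set.subset_univ _)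
            _ = Fintype.card V := by rw [Set.ncard_univ, Nat.card_eq_fintype_card]
          omega
    _ = k * (Fintype.card V - 1) := by
        rw [Finset.sum_const, Finset.card_range, smul_eq_mul]
  · intro A hcut e heG hcross
    by_contra heH
    obtain ⟨u, v, hev, hu, hv⟩ := hcross
    have hkey : ∀ i, i ∈ Finset.range k → ∃ f, f ∈ F i ∧ Crosses ends A f := by
      intro i hi
      rw [Finset.mem_range] at hi
      obtain ⟨hFsub, hFfor, hFmax⟩ := hF i hi
      have henotFi : e ∉ F i := fun h =>
        heH (Finset.mem_biUnion.mpr ⟨i, Finset.mem_range.mpr hi, h⟩)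
      have hnot : ¬ IsForest ends (insert e (F i)) := by
        intro hfor
        have hsub : insert e (F i) ⊆ G \ (Finset.range i).biUnion F := by
          intro x hx
          rcases Finset.mem_insert.mp hx with rfl | hx'
          · refine Finset.mem_sdiff.mpr ⟨heG, ?_⟩
            intro hmem
            obtain ⟨j, hj, hxj⟩ := Finset.mem_biUnion.mp hmem
            exact heH (Finset.mem_biUnion.mpr
              ⟨j, Finset.mem_range.mpr (lt_trans (Finset.mem_range.mp hj) hi), hxj⟩)
          · exact hFsub hx'
        have heq := hFmax _ (Finset.subset_insert _ _) hsub hfor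
        exact henotFi (heq ▸ Finset.mem_insert_self e (F i))
      exact NI_exists_crossing ends (F i) hFfor e henotFi hnot u v hev A hu hv
    choose g hg1 hg2 using hkey
    have hne : ∀ (i) (hi : i ∈ Finset.range k) (j) (hj : j ∈ Finset.range k),
        i < j → g i hi ≠ g j hj := by
      intro i hi j hj hij heq
      have h1 : g i hi ∈ (Finset.range j).biUnion F :=
        Finset.mem_biUnion.mpr ⟨i, Finset.mem_range.mpr hij, hg1 i hi⟩
      have h2 := (hF j (Finset.mem_range.mp hj)).1 (hg1 j hj)
      rw [← heq] at h2
      exact (Finset.mem_sdiff.mp h2).2 h1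
    set T : Finset E := (Finset.range k).attach.image (fun i => g i.1 i.2) with hTdef
    have hTcard : T.card = k := by
      rw [hTdef, Finset.card_image_of_injOn, Finset.card_attach, Finset.card_range]
      intro i _ j _ hgij
      rcases lt_trichotomy i.1 j.1 with h | h | h
      · exact absurd hgij (hne i.1 i.2 j.1 j.2 h)
      · exact Subtype.ext h
      · exact absurd hgij.symm (hne j.1 j.2 i.1 i.2 h)
    have heT : e ∉ T := by
      intro hmem
      obtain ⟨i, _, hgi⟩ := Finset.mem_image.mp hmem
      exact heH (Finset.mem_biUnion.mpr ⟨i.1, i.2, hgi ▸ hg1 i.1 i.2⟩)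
    have hsubS : (↑(insert e T) : Set E) ⊆ {e' : E | e' ∈ G ∧ Crosses ends A e'} := by
      intro x hx
      rcases Finset.mem_insert.mp hx with rfl | hx'
      · exact ⟨heG, u, v, hev, hu, hv⟩
      · obtain ⟨i, _, hgi⟩ := Finset.mem_image.mp hx'
        refine ⟨?_, hgi ▸ hg2 i.1 i.2⟩
        have := (hF i.1 (Finset.mem_range.mp i.2)).1 (hg1 i.1 i.2)
        exact hgi ▸ (Finset.mem_sdiff.mp this).1
    have hfin : ({e' : E | e' ∈ G ∧ Crosses ends A e'}).Finite :=
      G.finite_toSet.subset fun x hx => hx.1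
    have hge : k + 1 ≤ Nat.card {e : E | e ∈ G ∧ Crosses ends A e} := by
      calc k + 1 = (insert e T).card := by
            rw [Finset.card_insert_of_notMem heT, hTcard]
      _ = (↑(insert e T) : Set E).ncard := (Set.ncard_coe_finset _).symm
      _ ≤ ({e' : E | e' ∈ G ∧ Crosses ends A e'}).ncard := Set.ncard_le_ncard hsubS hfin
      _ = Nat.card {e : E | e ∈ G ∧ Crosses ends A e} := (Nat.card_coe_set_eq _).symm
    omega
end

section
/- Let G be a graph with spanning tree T and let e, f be distinct edges of T with e ∉ T_f and f ∉ T_e (i.e., neither subtree below one edge contains the other edge). Then the weight of the cut determined by removing e and f from T equals w(T_e) + w(T_f) - 2·w(T_e, T_f). -/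
open Finset

/-- Total weight of edges of a weighted graph `w` with one endpoint in `A`
and the other in `B`. -/
def interWeight {V : Type*} (w : V → V → ℝ) (A B : Finset V) : ℝ :=
  ∑ u ∈ A, ∑ v ∈ B, w u v

lemma interWeight_union_left {V : Type*} [DecidableEq V] (w : V → V → ℝ)
    (A B C : Finset V) (h : Disjoint A B) :
    interWeight w (A ∪ B) C = interWeight w A C + interWeight w B C := by
  simp [interWeight, Finset.sum_union h]

lemma interWeight_union_right {V : Type*} [DecidableEq V] (w : V → V → ℝ)
    (A B C : Finset V) (h : Disjoint B C) :
    interWeight w A (B ∪ C) = interWeight w A B + interWeight w A C := by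
  simp [interWeight, Finset.sum_union h, Finset.sum_add_distrib]

lemma interWeight_comm {V : Type*} (w : V → V → ℝ) (hsymm : ∀ u v, w u v = w v u)
    (A B : Finset V) : interWeight w A B = interWeight w B A := by
  rw [interWeight, Finset.sum_comm]
  simp only [interWeight]
  exact Finset.sum_congr rfl fun u _ => Finset.sum_congr rfl fun v _ => hsymm v u

/-- For tree edges `e, f` with disjoint subtrees `T_e`, `T_f` (neither contains
the other), the 2-respecting cut determined by `e` and `f`, whose vertex side is
`T_e ∪ T_f`, has weight `w(T_e) + w(T_f) - 2 w(T_e, T_f)`. -/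
theorem cut_two_respecting_disjoint {V : Type*} [Fintype V] [DecidableEq V]
    (w : V → V → ℝ) (hsymm : ∀ u v, w u v = w v u) (hnonneg : ∀ u v, 0 ≤ w u v)
    (hloop : ∀ u, w u u = 0)
    (Te Tf : Finset V) (hdisj : Disjoint Te Tf) :
    interWeight w (Te ∪ Tf) (Te ∪ Tf)ᶜ =
      interWeight w Te Teᶜ + interWeight w Tf Tfᶜ - 2 * interWeight w Te Tf := by
  have hTe : Teᶜ = Tf ∪ (Te ∪ Tf)ᶜ := by
    rw [Finset.compl_union]
    ext x
    simp only [Finset.mem_union, Finset.mem_compl, Finset.mem_inter]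
    constructor
    · intro hx
      by_cases h : x ∈ Tf
      · exact Or.inl h
      · exact Or.inr ⟨hx, h⟩
    · rintro (h | ⟨h, _⟩)
      · exact fun hx => Finset.disjoint_left.mp hdisj hx h
      · exact h
  have hTf : Tfᶜ = Te ∪ (Te ∪ Tf)ᶜ := by
    rw [Finset.compl_union]
    ext x
    simp only [Finset.mem_union, Finset.mem_compl, Finset.mem_inter]
    constructor
    · intro hx
      by_cases h : x ∈ Te
      · exact Or.inl h
      · exact Or.inr ⟨h, hx⟩
    · rintro (h | ⟨_, h⟩)
      · exact fun hx => Finset.disjoint_left.mp hdisj h hx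
      · exact h
  have d1 : Disjoint Tf (Te ∪ Tf)ᶜ := by
    exact disjoint_compl_right.mono_left Finset.subset_union_right
  have d2 : Disjoint Te (Te ∪ Tf)ᶜ := by
    exact disjoint_compl_right.mono_left Finset.subset_union_left
  rw [interWeight_union_left w Te Tf _ hdisj, hTe, hTf,
    interWeight_union_right w Te _ _ d1, interWeight_union_right w Tf _ _ d2,
    interWeight_comm w hsymm Tf Te]
  ring
end

section
/- Let T be a rooted spanning tree of a weighted graph G and e a tree edge. The set of tree edges f ∈ T_e such that e is down-interested in f (i.e., w(T_e) < 2·w(T_f, V \ T_e)) forms a path in T going down from e to some node d_e; that is, if e is down-interested in f then e is down-interested in every tree edge on the path from e to f, and e cannot be down-interested in two edges f, f' where neither is an ancestor of the other. -/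
open Finset

lemma interWeight_mono {V : Type*} [DecidableEq V] (w : V → V → ℝ)
    (hnonneg : ∀ u v, 0 ≤ w u v) {A A' : Finset V} (h : A ⊆ A') (B : Finset V) :
    interWeight w A B ≤ interWeight w A' B := by
  apply Finset.sum_le_sum_of_subset_of_nonneg h
  intro u _ _
  exact Finset.sum_nonneg fun v _ => hnonneg u v

lemma interWeight_union {V : Type*} [DecidableEq V] (w : V → V → ℝ)
    {A A' : Finset V} (h : Disjoint A A') (B : Finset V) :
    interWeight w (A ∪ A') B = interWeight w A B + interWeight w A' B := by
  unfold interWeight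
  exact Finset.sum_union h

/-- The set of edges that a fixed tree edge `e` (with subtree `Te`) is
down-interested in forms a single descending path below `e`:
(1) if `e` is down-interested in `f` (i.e. `w(Te) < 2 w(Tf, V \ Te)`) then `e`
is down-interested in every edge `f'` on the tree path from `e` to `f`
(so `Tf ⊆ Tf' ⊆ Te`); and
(2) `e` cannot be down-interested in two incomparable edges `f, f'`
(whose subtrees `Tf, Tf' ⊆ Te` are disjoint). -/
theorem down_interest_path {V : Type*} [Fintype V] [DecidableEq V]
    (w : V → V → ℝ) (hsymm : ∀ u v, w u v = w v u) (hnonneg : ∀ u v, 0 ≤ w u v)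
    (Te : Finset V) :
    (∀ Tf Tf' : Finset V, Tf ⊆ Tf' → Tf' ⊆ Te →
      interWeight w Te Teᶜ < 2 * interWeight w Tf Teᶜ →
      interWeight w Te Teᶜ < 2 * interWeight w Tf' Teᶜ) ∧
    (∀ Tf Tf' : Finset V, Tf ⊆ Te → Tf' ⊆ Te → Disjoint Tf Tf' →
      ¬(interWeight w Te Teᶜ < 2 * interWeight w Tf Teᶜ ∧
        interWeight w Te Teᶜ < 2 * interWeight w Tf' Teᶜ)) := by
  constructor
  · intro Tf Tf' hsub _ h
    have := interWeight_mono w hnonneg hsub Teᶜ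
    linarith
  · intro Tf Tf' hTf hTf' hdisj ⟨h1, h2⟩
    have hsum : interWeight w Tf Teᶜ + interWeight w Tf' Teᶜ
        ≤ interWeight w Te Teᶜ := by
      rw [← interWeight_union w hdisj]
      exact interWeight_mono w hnonneg (Finset.union_subset hTf hTf') Teᶜ
    linarith
end

section
/- Let P = (e_1, ..., e_ℓ) be a path of tree edges in a rooted spanning tree T of a weighted graph G such that the subtrees satisfy T_{e_1} ⊊ T_{e_2} ⊊ ... ⊊ T_{e_ℓ}. Define M[i,j] = cut(e_i, e_j) for i < j. Then M satisfies the partial Monge condition: for all i < j with i+1 < j, M[i,j] - M[i,j+1] ≥ M[i+1,j] - M[i+1,j+1] (whenever all entries are defined). -/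
open Finset

lemma interWeight_nonneg {V : Type*} (w : V → V → ℝ) (hnonneg : ∀ u v, 0 ≤ w u v)
    (A B : Finset V) : 0 ≤ interWeight w A B := by
  apply Finset.sum_nonneg; intro u _
  exact Finset.sum_nonneg fun v _ => hnonneg u v

lemma compl_eq_union {V : Type*} [Fintype V] [DecidableEq V] {A B : Finset V}
    (h : A ⊆ B) : Aᶜ = Bᶜ ∪ (B \ A) := by
  ext x
  simp only [Finset.mem_compl, Finset.mem_union, Finset.mem_sdiff]
  have hx : x ∈ A → x ∈ B := fun hxa => h hxa
  tauto

/-- Partial Monge property of the single-path cut matrix. Let `e_1, …, e_ℓ` be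
the edges of a descending path with strictly nested subtrees
`T 1 ⊊ T 2 ⊊ ⋯ ⊊ T ℓ` (indices `0, …, ℓ-1` here), and for `i < j` let
`M i j = cut(e_i, e_j) = w(T i) + w(T j) - 2 w(T i, V \ T j)`. Then for all
`i + 1 < j` with `j + 1 < ℓ`,
`M i j - M i (j+1) ≥ M (i+1) j - M (i+1) (j+1)`. -/
theorem single_path_partial_monge {V : Type*} [Fintype V] [DecidableEq V]
    (w : V → V → ℝ) (hsymm : ∀ u v, w u v = w v u) (hnonneg : ∀ u v, 0 ≤ w u v)
    (ℓ : ℕ) (T : ℕ → Finset V)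
    (hchain : ∀ i j, i < j → j < ℓ → T i ⊂ T j)
    (M : ℕ → ℕ → ℝ)
    (hM : ∀ i j, i < j → j < ℓ →
      M i j = interWeight w (T i) (T i)ᶜ + interWeight w (T j) (T j)ᶜ
        - 2 * interWeight w (T i) (T j)ᶜ) :
    ∀ i j, i + 1 < j → j + 1 < ℓ →
      M i j - M i (j + 1) ≥ M (i + 1) j - M (i + 1) (j + 1) := by
  intro i j hij hjl
  have hjl' : j < ℓ := Nat.lt_of_succ_lt hjl
  have hij1 : i < j := Nat.lt_of_succ_lt hij
  have hsubI : T i ⊆ T (i + 1) :=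
    (hchain i (i + 1) (Nat.lt_succ_self i) (lt_trans hij hjl')).subset
  have hsubJ : T j ⊆ T (j + 1) :=
    (hchain j (j + 1) (Nat.lt_succ_self j) hjl).subset
  rw [hM i j hij1 hjl', hM i (j + 1) (Nat.lt_succ_of_lt hij1) hjl,
    hM (i + 1) j hij hjl', hM (i + 1) (j + 1) (Nat.lt_succ_of_lt hij) hjl]
  have hdisjJ : Disjoint (T (j + 1))ᶜ (T (j + 1) \ T j) :=
    Finset.disjoint_left.2 fun x hx hx' =>
      (Finset.mem_compl.1 hx) (Finset.mem_sdiff.1 hx').1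
  have hdisjI : Disjoint (T i) (T (i + 1) \ T i) :=
    Finset.disjoint_left.2 fun x hx hx' => (Finset.mem_sdiff.1 hx').2 hx
  have h1 : interWeight w (T i) (T j)ᶜ
      = interWeight w (T i) (T (j + 1))ᶜ + interWeight w (T i) (T (j + 1) \ T j) := by
    rw [compl_eq_union hsubJ, interWeight_union_right w _ _ _ hdisjJ]
  have h2 : interWeight w (T (i + 1)) (T j)ᶜ
      = interWeight w (T (i + 1)) (T (j + 1))ᶜ
        + interWeight w (T (i + 1)) (T (j + 1) \ T j) := by
    rw [compl_eq_union hsubJ, interWeight_union_right w _ _ _ hdisjJ]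
  have h3 : interWeight w (T (i + 1)) (T (j + 1) \ T j)
      = interWeight w (T i) (T (j + 1) \ T j)
        + interWeight w (T (i + 1) \ T i) (T (j + 1) \ T j) := by
    rw [← interWeight_union_left w _ _ _ hdisjI, Finset.union_sdiff_of_subset hsubI]
  have hpos : 0 ≤ interWeight w (T (i + 1) \ T i) (T (j + 1) \ T j) :=
    interWeight_nonneg w hnonneg _ _
  rw [h1, h2, h3]
  linarith
end
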